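/- In type A_{n−1}, for the fixed λ-chain Γ with λ strict, each segment Γ(k) consists of k rows of n−k roots each, so |Γ(k)| = k(n−k), and |Γ'(k)| = k(n−k−1); consequently the total length of Γ = Γ_{λ₁}···Γ₂ equals ℓ(v), where v is the minimal length element of τ_λ S_n, i.e. the number of affine hyperplanes separating A° from the final alcove. -/

import Mathlib

/-!
Statement 16: In type A_{n-1}, |Γ(k)| = k(n-k) (k rows of n-k roots each) and
|Γ'(k)| = k(n-k-1); consequently the total length of Γ = Γ_{λ₁} ⋯ Γ₂ equals ℓ(v),
where v is the minimal-length element of τ_λ S_n, i.e. the number of affine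
hyperplanes separating A° from the final alcove.
-/

namespace Stmt16



def cells (n : ℕ) (lam : ℕ → ℕ) : Finset (ℕ × ℕ) :=
  (Finset.Icc 1 (n - 1)).biUnion fun i => {i} ×ˢ Finset.Icc 1 (lam i)

def conj (n : ℕ) (lam : ℕ → ℕ) (j : ℕ) : ℕ :=
  ((Finset.Icc 1 (n - 1)).filter fun i => j ≤ lam i).card

/-- the row ((a,n),(a,n-1),…,(a,k+1)) of the segment Γ(k) -/
def rowG (n a k : ℕ) : List (ℕ × ℕ) :=
  ((List.Ico (k + 1) (n + 1)).reverse).map fun b => (a, b)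

/-- the same row with the last root (a,k+1) removed -/
def rowG' (n a k : ℕ) : List (ℕ × ℕ) :=
  ((List.Ico (k + 2) (n + 1)).reverse).map fun b => (a, b)

/-- the segment Γ(k): rows a = k, k-1, …, 1 -/
def GammaSeg (n k : ℕ) : List (ℕ × ℕ) :=
  ((List.range k).reverse).flatMap fun a0 => rowG n (a0 + 1) k

/-- the segment Γ'(k) -/
def GammaSeg' (n k : ℕ) : List (ℕ × ℕ) :=
  ((List.range k).reverse).flatMap fun a0 => rowG' n (a0 + 1) k

open Classical in
/-- the factor Γ_j of the λ-chain: Γ'(λ'_j) if j is minimal with its conjugate value,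
Γ(λ'_j) otherwise -/
noncomputable def GammaFactor (n : ℕ) (lam : ℕ → ℕ) (j : ℕ) : List (ℕ × ℕ) :=
  if (∀ i, 1 ≤ i → conj n lam i = conj n lam j → j ≤ i) then
    GammaSeg' n (conj n lam j) else GammaSeg n (conj n lam j)

/-- the concatenation Γ_{λ₁} Γ_{λ₁ - 1} ⋯ Γ_j -/
noncomputable def GammaDown (n : ℕ) (lam : ℕ → ℕ) (j : ℕ) : List (ℕ × ℕ) :=
  ((List.range (lam 1 + 1 - j)).reverse).flatMap fun j0 => GammaFactor n lam (j0 + j)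

/-- the fixed λ-chain Γ = Γ_{λ₁} ⋯ Γ₂ -/
noncomputable def GammaChain (n : ℕ) (lam : ℕ → ℕ) : List (ℕ × ℕ) :=
  GammaDown n lam 2

/-- the product of the transpositions at the selected (global) positions of a prefix of Γ,
taken in order -/
noncomputable def prodSel (L : List (ℕ × ℕ)) (J : Finset ℕ) : Equiv.Perm ℕ :=
  (((L.zipIdx.map fun q => (q.2, q.1)).filter fun q => q.1 ∈ J).map fun q => Equiv.swap q.2.1 q.2.2).prod

/-- π_j = w T_{λ₁} ⋯ T_{j+1} -/
noncomputable def piPerm (n : ℕ) (lam : ℕ → ℕ) (w : Equiv.Perm ℕ) (J : Finset ℕ)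
    (j : ℕ) : Equiv.Perm ℕ :=
  w * prodSel (GammaDown n lam (j + 1)) J

/-- the filling map: f(w,T)(i,j) = π_j(i) -/
noncomputable def fillingMap (n : ℕ) (lam : ℕ → ℕ) (w : Equiv.Perm ℕ) (J : Finset ℕ) :
    ℕ × ℕ → ℕ :=
  fun c => piPerm n lam w J c.2 c.1

/-- w is a permutation of {1,…,n} (an element of S_n) -/
def IsSnPerm (n : ℕ) (w : Equiv.Perm ℕ) : Prop :=
  ∀ i : ℕ, (i ∈ Finset.Icc 1 n → w i ∈ Finset.Icc 1 n) ∧ (i ∉ Finset.Icc 1 n → w i = i)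



open scoped RealInnerProductSpace

/-- the ambient Euclidean space -/
abbrev V (n : ℕ) := EuclideanSpace ℝ (Fin n)

/-- the standard coroot α^∨ = 2α/⟨α,α⟩ -/
noncomputable def coroot {n : ℕ} (α : V n) : V n := (2 / (‖α‖ ^ 2)) • α

/-- the pairing ⟨x, α^∨⟩ -/
noncomputable def cpair {n : ℕ} (x α : V n) : ℝ := ⟪x, coroot α⟫

/-- the affine hyperplane H_{α,k} = {x : ⟨x,α^∨⟩ = k} -/
def Hyp {n : ℕ} (α : V n) (k : ℝ) : Set (V n) := {x | cpair x α = k}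

/-- the union of all affine hyperplanes of the arrangement -/
def allHyps {n : ℕ} (pos : Finset (V n)) : Set (V n) :=
  ⋃ α ∈ pos, ⋃ k : ℤ, Hyp α (k : ℝ)

/-- an alcove: a connected component of the complement of the hyperplane arrangement -/
def IsAlcove {n : ℕ} (pos : Finset (V n)) (A : Set (V n)) : Prop :=
  ∃ x, x ∉ allHyps pos ∧ A = connectedComponentIn (allHyps pos)ᶜ x

/-- the fundamental alcove A° -/
def fundAlcove {n : ℕ} (pos : Finset (V n)) : Set (V n) :=
  {x | ∀ α ∈ pos, 0 < cpair x α ∧ cpair x α < 1}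

/-- the affine reflection s_{α,k} -/
noncomputable def affRefl {n : ℕ} (α : V n) (k : ℝ) (x : V n) : V n :=
  x - (cpair x α - k) • α

/-- p lies on the hyperplane H_{α,k} and on no other hyperplane of the arrangement -/
def onlyOn {n : ℕ} (pos : Finset (V n)) (p α : V n) (k : ℝ) : Prop :=
  cpair p α = k ∧
  ∀ β ∈ pos, ∀ l : ℤ, cpair p β = (l : ℝ) → Hyp β (l : ℝ) = Hyp α k

/-- A and B are adjacent alcoves with common wall H_{β,k}, and the root β points in the
direction from A to B -/
def AdjStep {n : ℕ} (pos : Finset (V n)) (A B : Set (V n)) (β : V n) (k : ℝ) : Prop :=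
  IsAlcove pos A ∧ IsAlcove pos B ∧ B = affRefl β k '' A ∧
  (∀ a ∈ A, cpair a β < k) ∧ (∀ b ∈ B, k < cpair b β) ∧
  ∃ p, p ∈ closure A ∩ closure B ∧ onlyOn pos p β k

/-- an alcove path with the given labels (roots and hyperplane levels) -/
def IsAlcovePath {n m : ℕ} (pos : Finset (V n)) (A : Fin (m + 1) → Set (V n))
    (β : Fin m → V n) (kk : Fin m → ℤ) : Prop :=
  ∀ i : Fin m, AdjStep pos (A i.castSucc) (A i.succ) (β i) ((kk i : ℝ))

/-- a reduced alcove path: of minimal length among all alcove paths with the same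
endpoints -/
def IsReducedPath {n m : ℕ} (pos : Finset (V n)) (A : Fin (m + 1) → Set (V n))
    (β : Fin m → V n) (kk : Fin m → ℤ) : Prop :=
  IsAlcovePath pos A β kk ∧
  ∀ (m' : ℕ) (A' : Fin (m' + 1) → Set (V n)) (β' : Fin m' → V n) (kk' : Fin m' → ℤ),
    IsAlcovePath pos A' β' kk' → A' 0 = A 0 → A' (Fin.last m') = A (Fin.last m) →
      m ≤ m'

/-- the finite Weyl group W, as a monoid of self-maps of V generated by the linear
reflections s_α (it is a group since the generators are involutions) -/
noncomputable def Wfin {n : ℕ} (pos : Finset (V n)) : Submonoid (Function.End (V n)) :=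
  Submonoid.closure {g | ∃ α ∈ pos, g = affRefl α 0}

/-- translation by λ -/
def tau {n : ℕ} (lamv : V n) : Function.End (V n) := fun x => x + lamv

/-- H_{β,k} separates S and T -/
def SeparatesH {n : ℕ} (β : V n) (k : ℝ) (S T : Set (V n)) : Prop :=
  ((∀ x ∈ S, cpair x β < k) ∧ (∀ y ∈ T, k < cpair y β)) ∨
  ((∀ x ∈ T, cpair x β < k) ∧ (∀ y ∈ S, k < cpair y β))

/-- the length of an affine Weyl group element: the number of affine hyperplanes
separating A° from g(A°) -/
noncomputable def lenAff {n : ℕ} (pos : Finset (V n)) (g : Function.End (V n)) : ℕ :=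
  Set.ncard {q : V n × ℤ | q.1 ∈ pos ∧
    SeparatesH q.1 (q.2 : ℝ) (fundAlcove pos) (g '' fundAlcove pos)}

/-- v is the minimal-length element of the coset τ_λ W of the affine Weyl group -/
noncomputable def IsMinCoset {n : ℕ} (pos : Finset (V n)) (lamv : V n)
    (v : Function.End (V n)) : Prop :=
  (∃ u ∈ Wfin pos, v = tau lamv * u) ∧
  ∀ v' : Function.End (V n), (∃ u ∈ Wfin pos, v' = tau lamv * u) →
    lenAff pos v ≤ lenAff pos v'

open scoped RealInnerProductSpace

noncomputable def epsN (n a : ℕ) : V n :=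
  if h : a - 1 < n then EuclideanSpace.single ⟨a - 1, h⟩ (1 : ℝ) else 0

noncomputable def rootV (n : ℕ) (p : ℕ × ℕ) : V n := epsN n p.1 - epsN n p.2

open Classical in
noncomputable def posA (n : ℕ) : Finset (V n) :=
  ((Finset.Icc 1 n ×ˢ Finset.Icc 1 n).filter fun p => p.1 < p.2).image (rootV n)

noncomputable def lamVecV (n : ℕ) (lam : ℕ → ℕ) : V n :=
  ∑ i ∈ Finset.Icc 1 (n - 1), (lam i : ℝ) • epsN n i

lemma rowG_length (n a k : ℕ) : (rowG n a k).length = n - k := by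
  simp [rowG]

lemma rowG'_length (n a k : ℕ) : (rowG' n a k).length = n - k - 1 := by
  simp [rowG']; omega

lemma GammaSeg_length (n k : ℕ) : (GammaSeg n k).length = k * (n - k) := by
  simp [GammaSeg, List.length_flatMap, Function.comp_def, rowG_length, List.map_const',
    List.sum_replicate, mul_comm]

lemma GammaSeg'_length (n k : ℕ) : (GammaSeg' n k).length = k * (n - k - 1) := by
  simp [GammaSeg', List.length_flatMap, Function.comp_def, rowG'_length, List.map_const',
    List.sum_replicate, mul_comm]
section Comb
variable (n : ℕ) (lam : ℕ → ℕ)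

/-- strict antitonicity of lam on [1,n] -/
lemma lam_strict (hn : 2 ≤ n)
    (hstrict : ∀ i, 1 ≤ i → i < n - 1 → lam (i + 1) < lam i)
    (hpos : 0 < lam (n - 1)) (hlen : ∀ i, n - 1 < i → lam i = 0) :
    ∀ a b, 1 ≤ a → a < b → b ≤ n → lam b < lam a := by
  have key : ∀ b, 1 ≤ b → b ≤ n - 1 → ∀ a, 1 ≤ a → a < b → lam b < lam a := by
    intro b
    induction b with
    | zero => omega
    | succ c ih =>
      intro h1 h2 a ha hab
      rcases Nat.lt_or_ge a c with h | h
      · have hc1 : 1 ≤ c := by omega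
        exact lt_trans (hstrict c hc1 (by omega)) (ih hc1 (by omega) a ha h)
      · have : a = c := by omega
        subst this
        exact hstrict a ha (by omega)
  intro a b ha hab hb
  rcases Nat.lt_or_ge b n with h | h
  · exact key b (by omega) (by omega) a ha hab
  · have hbn : b = n := by omega
    rw [hbn, hlen n (by omega)]
    rcases Nat.lt_or_ge a (n-1) with h2 | h2
    · exact lt_trans hpos (key (n-1) (by omega) le_rfl a ha h2)
    · have : a = n - 1 := by omega
      exact this ▸ hpos
end Comb
lemma downclosed_eq_Icc (n : ℕ) (S : Finset ℕ) (hSub : S ⊆ Finset.Icc 1 n)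
    (hdc : ∀ a ∈ S, ∀ b, 1 ≤ b → b ≤ a → b ∈ S) : S = Finset.Icc 1 S.card := by
  ext a
  simp only [Finset.mem_Icc]
  constructor
  · intro ha
    refine ⟨(Finset.mem_Icc.mp (hSub ha)).1, ?_⟩
    calc a = (Finset.Icc 1 a).card := by simp
    _ ≤ S.card := Finset.card_le_card
        (fun b hb => hdc a ha b (Finset.mem_Icc.mp hb).1 (Finset.mem_Icc.mp hb).2)
  · rintro ⟨h1, h2⟩
    by_contra hna
    have hsub2 : S ⊆ Finset.Icc 1 (a-1) := by
      intro b hb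
      rw [Finset.mem_Icc]
      refine ⟨(Finset.mem_Icc.mp (hSub hb)).1, ?_⟩
      by_contra hba
      exact hna (hdc b hb a h1 (by omega))
    have := Finset.card_le_card hsub2
    simp at this
    omega

/-- the set of rows a ∈ [1,n] with lam a ≥ j -/
def Sfin (n : ℕ) (lam : ℕ → ℕ) (j : ℕ) : Finset ℕ :=
  (Finset.Icc 1 n).filter fun a => j ≤ lam a

section Comb2
variable {n : ℕ} {lam : ℕ → ℕ}

lemma Sfin_eq (hn : 2 ≤ n) (hlen : ∀ i, n - 1 < i → lam i = 0) {j : ℕ} (hj : 1 ≤ j) :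
    Sfin n lam j = (Finset.Icc 1 (n-1)).filter fun i => j ≤ lam i := by
  unfold Sfin
  ext a
  simp only [Finset.mem_filter, Finset.mem_Icc]
  constructor
  · rintro ⟨⟨h1, h2⟩, h3⟩
    refine ⟨⟨h1, ?_⟩, h3⟩
    by_contra h
    rw [hlen a (by omega)] at h3
    omega
  · rintro ⟨⟨h1, h2⟩, h3⟩
    exact ⟨⟨h1, by omega⟩, h3⟩

lemma conj_eq_Sfin (hn : 2 ≤ n) (hlen : ∀ i, n - 1 < i → lam i = 0) {j : ℕ} (hj : 1 ≤ j) :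
    conj n lam j = (Sfin n lam j).card := by
  rw [Sfin_eq hn hlen hj]; rfl

lemma Sfin_Icc (hn : 2 ≤ n)
    (hmono : ∀ a b, 1 ≤ a → a < b → b ≤ n → lam b < lam a)
    {j : ℕ} (hj : 1 ≤ j) :
    Sfin n lam j = Finset.Icc 1 (Sfin n lam j).card := by
  apply downclosed_eq_Icc n
  · exact Finset.filter_subset _ _
  · intro a ha b hb1 hba
    simp only [Sfin, Finset.mem_filter, Finset.mem_Icc] at ha ⊢
    rcases Nat.lt_or_ge b a with h | h
    · exact ⟨⟨hb1, by omega⟩, le_trans ha.2 (le_of_lt (hmono b a hb1 h ha.1.2))⟩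
    · have : b = a := by omega
      rw [this]; exact ha

lemma lam_inj (hmono : ∀ a b, 1 ≤ a → a < b → b ≤ n → lam b < lam a)
    {a b : ℕ} (ha : 1 ≤ a) (han : a ≤ n) (hb : 1 ≤ b) (hbn : b ≤ n)
    (h : lam a = lam b) : a = b := by
  rcases Nat.lt_trichotomy a b with h1 | h1 | h1
  · have := hmono a b ha h1 hbn; omega
  · exact h1
  · have := hmono b a hb h1 han; omega
end Comb2
section Comb3
variable {n : ℕ} {lam : ℕ → ℕ}

lemma conj_antitone (hn : 2 ≤ n) (hlen : ∀ i, n - 1 < i → lam i = 0)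
    {j j' : ℕ} (hj : 1 ≤ j) (hjj : j ≤ j') :
    conj n lam j' ≤ conj n lam j := by
  rw [conj_eq_Sfin hn hlen hj, conj_eq_Sfin hn hlen (le_trans hj hjj)]
  apply Finset.card_le_card
  intro a ha
  simp only [Sfin, Finset.mem_filter] at ha ⊢
  exact ⟨ha.1, le_trans hjj ha.2⟩

lemma factor_card (hn : 2 ≤ n)
    (hmono : ∀ a b, 1 ≤ a → a < b → b ≤ n → lam b < lam a)
    (hlen : ∀ i, n - 1 < i → lam i = 0)
    {j : ℕ} (hj2 : 2 ≤ j) (hj1 : j ≤ lam 1) :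
    (GammaFactor n lam j).length =
    ((Finset.Icc 1 n ×ˢ Finset.Icc 1 n).filter
      fun p => lam p.2 + 2 ≤ j ∧ j ≤ lam p.1).card := by
  classical
  set k := conj n lam j with hk
  have hj1' : (1:ℕ) ≤ j := by omega
  have hkS : k = (Sfin n lam j).card := conj_eq_Sfin hn hlen hj1'
  have hSIcc : Sfin n lam j = Finset.Icc 1 k := by
    rw [hkS]; exact Sfin_Icc hn hmono hj1'
  have hmemS : ∀ j' a, a ∈ Sfin n lam j' ↔ (1 ≤ a ∧ a ≤ n ∧ j' ≤ lam a) := by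
    intro j' a
    simp only [Sfin, Finset.mem_filter, Finset.mem_Icc, and_assoc]
  have hk1 : 1 ≤ k := by
    rw [hkS]
    have : 1 ∈ Sfin n lam j := (hmemS _ 1).mpr ⟨le_rfl, by omega, hj1⟩
    exact Finset.card_pos.mpr ⟨1, this⟩
  have hkn : k ≤ n - 1 := by
    rw [hk]
    calc conj n lam j ≤ (Finset.Icc 1 (n-1)).card := Finset.card_filter_le _ _
    _ = n - 1 := by simp
  by_cases hb : ∃ b, 1 ≤ b ∧ b ≤ n ∧ lam b = j - 1
  -- minimal case
  · obtain ⟨b, hb1, hbn, hbl⟩ := hb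
    have hbnotS : b ∉ Sfin n lam j := by
      rw [hmemS _]; omega
    have hSj1 : Sfin n lam (j-1) = insert b (Sfin n lam j) := by
      ext a
      simp only [Finset.mem_insert, hmemS _]
      constructor
      · rintro ⟨h1, h2, h3⟩
        rcases Nat.lt_or_ge (lam a) j with h | h
        · left; exact lam_inj hmono h1 h2 hb1 hbn (by omega)
        · right; exact ⟨h1, h2, h⟩
      · rintro (rfl | ⟨h1, h2, h3⟩)
        · exact ⟨hb1, hbn, by omega⟩
        · exact ⟨h1, h2, by omega⟩
    have hconj1 : conj n lam (j-1) = k + 1 := by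
      rw [conj_eq_Sfin hn hlen (by omega : (1:ℕ) ≤ j - 1), hSj1,
        Finset.card_insert_of_notMem hbnotS, hkS]
    have hmin : (∀ i, 1 ≤ i → conj n lam i = conj n lam j → j ≤ i) := by
      intro i hi hconj
      by_contra h
      have hij : i ≤ j - 1 := by omega
      have := conj_antitone hn hlen (lam := lam) hi hij
      rw [hconj1] at this
      omega
    rw [GammaFactor, if_pos hmin, ← hk, GammaSeg'_length]
    have hfilter : ((Finset.Icc 1 n ×ˢ Finset.Icc 1 n).filter
        fun p => lam p.2 + 2 ≤ j ∧ j ≤ lam p.1)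
        = Finset.Icc 1 k ×ˢ Finset.Icc (k+2) n := by
      ext p
      simp only [Finset.mem_filter, Finset.mem_product, Finset.mem_Icc]
      constructor
      · rintro ⟨⟨⟨h1a, h1b⟩, ⟨h2a, h2b⟩⟩, h3, h4⟩
        have hp1 : p.1 ∈ Sfin n lam j := (hmemS _ p.1).mpr ⟨h1a, h1b, h4⟩
        rw [hSIcc, Finset.mem_Icc] at hp1
        have hp2 : p.2 ∉ Sfin n lam (j-1) := by
          rw [hmemS _]; omega
        rw [conj_eq_Sfin hn hlen (by omega : (1:ℕ) ≤ j - 1)] at hconj1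
        rw [Sfin_Icc hn hmono (by omega : (1:ℕ) ≤ j - 1), hconj1, Finset.mem_Icc] at hp2
        exact ⟨⟨hp1.1, hp1.2⟩, by omega, h2b⟩
      · rintro ⟨⟨h1a, h1b⟩, ⟨h2a, h2b⟩⟩
        have hp1 : p.1 ∈ Sfin n lam j := by
          rw [hSIcc, Finset.mem_Icc]; exact ⟨h1a, h1b⟩
        rw [hmemS _] at hp1
        have hp2 : p.2 ∉ Sfin n lam (j-1) := by
          rw [conj_eq_Sfin hn hlen (by omega : (1:ℕ) ≤ j - 1)] at hconj1
          rw [Sfin_Icc hn hmono (by omega : (1:ℕ) ≤ j - 1), hconj1, Finset.mem_Icc]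
          omega
        rw [hmemS _] at hp2
        have : ¬ (j - 1 ≤ lam p.2) := by
          intro h; exact hp2 ⟨by omega, by omega, h⟩
        exact ⟨⟨⟨hp1.1, hp1.2.1⟩, ⟨by omega, h2b⟩⟩, by omega, hp1.2.2⟩
    rw [hfilter, Finset.card_product, Nat.card_Icc, Nat.card_Icc]
    have e1 : k + 1 - 1 = k := by omega
    have e2 : n + 1 - (k + 2) = n - k - 1 := by omega
    rw [e1, e2]
  -- non-minimal case
  · push_neg at hb
    have hSj1 : Sfin n lam (j-1) = Sfin n lam j := by
      ext a
      simp only [hmemS _]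
      constructor
      · rintro ⟨h1, h2, h3⟩
        refine ⟨h1, h2, ?_⟩
        rcases Nat.lt_or_ge (lam a) j with h | h
        · exact absurd (by omega : lam a = j - 1) (hb a h1 h2)
        · exact h
      · rintro ⟨h1, h2, h3⟩; exact ⟨h1, h2, by omega⟩
    have hconj1 : conj n lam (j-1) = k := by
      rw [conj_eq_Sfin hn hlen (by omega : (1:ℕ) ≤ j - 1), hSj1, hkS]
    have hmin : ¬ (∀ i, 1 ≤ i → conj n lam i = conj n lam j → j ≤ i) := by
      intro h
      have := h (j-1) (by omega) hconj1
      omega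
    rw [GammaFactor, if_neg hmin, ← hk, GammaSeg_length]
    have hfilter : ((Finset.Icc 1 n ×ˢ Finset.Icc 1 n).filter
        fun p => lam p.2 + 2 ≤ j ∧ j ≤ lam p.1)
        = Finset.Icc 1 k ×ˢ Finset.Icc (k+1) n := by
      ext p
      simp only [Finset.mem_filter, Finset.mem_product, Finset.mem_Icc]
      constructor
      · rintro ⟨⟨⟨h1a, h1b⟩, ⟨h2a, h2b⟩⟩, h3, h4⟩
        have hp1 : p.1 ∈ Sfin n lam j := (hmemS _ p.1).mpr ⟨h1a, h1b, h4⟩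
        rw [hSIcc, Finset.mem_Icc] at hp1
        have hp2 : p.2 ∉ Sfin n lam j := by
          rw [hmemS _]; omega
        rw [hSIcc, Finset.mem_Icc] at hp2
        exact ⟨⟨hp1.1, hp1.2⟩, by omega, h2b⟩
      · rintro ⟨⟨h1a, h1b⟩, ⟨h2a, h2b⟩⟩
        have hp1 : p.1 ∈ Sfin n lam j := by
          rw [hSIcc, Finset.mem_Icc]; exact ⟨h1a, h1b⟩
        rw [hmemS _] at hp1
        have hp2 : p.2 ∉ Sfin n lam (j-1) := by
          rw [hSj1, hSIcc, Finset.mem_Icc]; omega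
        rw [hmemS _] at hp2
        have : ¬ (j - 1 ≤ lam p.2) := by
          intro h; exact hp2 ⟨by omega, by omega, h⟩
        exact ⟨⟨⟨hp1.1, hp1.2.1⟩, ⟨by omega, h2b⟩⟩, by omega, hp1.2.2⟩
    rw [hfilter, Finset.card_product, Nat.card_Icc, Nat.card_Icc]
    have e1 : k + 1 - 1 = k := by omega
    have e2 : n + 1 - (k + 1) = n - k := by omega
    rw [e1, e2]
end Comb3
section Comb4
variable {n : ℕ} {lam : ℕ → ℕ}

lemma chain_length (hn : 2 ≤ n)
    (hmono : ∀ a b, 1 ≤ a → a < b → b ≤ n → lam b < lam a)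
    (hlen : ∀ i, n - 1 < i → lam i = 0) :
    (GammaChain n lam).length =
    ∑ p ∈ (Finset.Icc 1 n ×ˢ Finset.Icc 1 n).filter (fun p => p.1 < p.2),
      (lam p.1 - lam p.2 - 1) := by
  classical
  have hple : ∀ a, 1 ≤ a → a ≤ n → lam a ≤ lam 1 := by
    intro a h1 h2
    rcases Nat.lt_or_ge 1 a with h | h
    · exact le_of_lt (hmono 1 a le_rfl h h2)
    · have : a = 1 := by omega
      rw [this]
  have step1 : (GammaChain n lam).length =
      ∑ j0 ∈ Finset.range (lam 1 + 1 - 2), (GammaFactor n lam (j0 + 2)).length := by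
    rw [GammaChain, GammaDown, List.length_flatMap, List.map_reverse, List.sum_reverse]
    exact rfl
  rw [step1]
  have step2 : ∀ j0 ∈ Finset.range (lam 1 + 1 - 2),
      (GammaFactor n lam (j0 + 2)).length =
      ((Finset.Icc 1 n ×ˢ Finset.Icc 1 n).filter
        fun p => lam p.2 + 2 ≤ j0 + 2 ∧ j0 + 2 ≤ lam p.1).card := by
    intro j0 hj0
    rw [Finset.mem_range] at hj0
    exact factor_card hn hmono hlen (by omega) (by omega)
  rw [Finset.sum_congr rfl step2]
  -- swap the double sum
  have step3 : ∑ j0 ∈ Finset.range (lam 1 + 1 - 2),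
      ((Finset.Icc 1 n ×ˢ Finset.Icc 1 n).filter
        fun p => lam p.2 + 2 ≤ j0 + 2 ∧ j0 + 2 ≤ lam p.1).card =
      ∑ p ∈ Finset.Icc 1 n ×ˢ Finset.Icc 1 n,
        ((Finset.range (lam 1 + 1 - 2)).filter
          fun j0 => lam p.2 + 2 ≤ j0 + 2 ∧ j0 + 2 ≤ lam p.1).card := by
    simp only [Finset.card_filter]
    exact Finset.sum_comm
  rw [step3]
  have step4 : ∀ p ∈ Finset.Icc 1 n ×ˢ Finset.Icc 1 n,
      ((Finset.range (lam 1 + 1 - 2)).filter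
        fun j0 => lam p.2 + 2 ≤ j0 + 2 ∧ j0 + 2 ≤ lam p.1).card
      = lam p.1 - lam p.2 - 1 := by
    intro p hp
    rw [Finset.mem_product, Finset.mem_Icc, Finset.mem_Icc] at hp
    have h1 : lam p.1 ≤ lam 1 := hple p.1 hp.1.1 hp.1.2
    have : ((Finset.range (lam 1 + 1 - 2)).filter
        fun j0 => lam p.2 + 2 ≤ j0 + 2 ∧ j0 + 2 ≤ lam p.1)
        = Finset.Ico (lam p.2) (lam p.1 - 1) := by
      ext j0
      simp only [Finset.mem_filter, Finset.mem_range, Finset.mem_Ico]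
      omega
    rw [this, Nat.card_Ico]
    omega
  rw [Finset.sum_congr rfl step4]
  rw [← Finset.sum_filter_add_sum_filter_not (Finset.Icc 1 n ×ˢ Finset.Icc 1 n)
    (fun p => p.1 < p.2)]
  have step5 : ∑ p ∈ (Finset.Icc 1 n ×ˢ Finset.Icc 1 n).filter (fun p => ¬ p.1 < p.2),
      (lam p.1 - lam p.2 - 1) = 0 := by
    apply Finset.sum_eq_zero
    intro p hp
    rw [Finset.mem_filter, Finset.mem_product, Finset.mem_Icc, Finset.mem_Icc] at hp
    rcases Nat.lt_or_ge p.2 p.1 with h | h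
    · have := hmono p.2 p.1 hp.1.2.1 h hp.1.1.2
      omega
    · have : p.1 = p.2 := by omega
      rw [this]
      omega
  omega
end Comb4
section Analytic
variable {n : ℕ}

lemma epsN_eq (a : ℕ) (ha : a - 1 < n) :
    epsN n a = EuclideanSpace.single (⟨a-1, ha⟩ : Fin n) (1:ℝ) := dif_pos ha

lemma inner_single_one (x : V n) (i : Fin n) :
    ⟪x, (EuclideanSpace.single i 1 : V n)⟫ = x i := by
  rw [EuclideanSpace.inner_single_right]; simp

lemma inner_rootV (x : V n) (a b : ℕ) (ha : a - 1 < n) (hb : b - 1 < n) :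
    ⟪x, rootV n (a, b)⟫ = x ⟨a-1, ha⟩ - x ⟨b-1, hb⟩ := by
  rw [rootV, epsN_eq a ha, epsN_eq b hb, inner_sub_right, inner_single_one, inner_single_one]

lemma norm_sq_rootV (a b : ℕ) (ha : a - 1 < n) (hb : b - 1 < n) (hab : a - 1 ≠ b - 1) :
    ‖rootV n (a, b)‖ ^ 2 = 2 := by
  rw [← real_inner_self_eq_norm_sq]
  rw [inner_rootV _ a b ha hb, rootV, epsN_eq a ha, epsN_eq b hb]
  have h1 : (⟨a-1, ha⟩ : Fin n) ≠ ⟨b-1, hb⟩ := by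
    simp [Fin.ext_iff, hab]
  simp only [EuclideanSpace.single_apply, PiLp.sub_apply]
  rw [if_neg (Ne.symm h1), if_neg h1]
  norm_num

lemma cpair_rootV (x : V n) (a b : ℕ) (ha : a - 1 < n) (hb : b - 1 < n)
    (hab : a - 1 ≠ b - 1) :
    cpair x (rootV n (a, b)) = x ⟨a-1, ha⟩ - x ⟨b-1, hb⟩ := by
  rw [cpair, coroot, real_inner_smul_right, norm_sq_rootV a b ha hb hab,
    inner_rootV x a b ha hb]
  norm_num
end Analytic
section Analytic2
variable {n : ℕ}

lemma rootV_coord (a b : ℕ) (ha : a - 1 < n) (hb : b - 1 < n) (i : Fin n) :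
    rootV n (a, b) i =
      (if (i:ℕ) = a - 1 then (1:ℝ) else 0) - (if (i:ℕ) = b - 1 then (1:ℝ) else 0) := by
  rw [rootV, epsN_eq a ha, epsN_eq b hb]
  simp [EuclideanSpace.single_apply, Fin.ext_iff]

lemma mem_posA {β : V n} :
    β ∈ posA n ↔ ∃ a b : ℕ, 1 ≤ a ∧ a < b ∧ b ≤ n ∧ β = rootV n (a, b) := by
  classical
  constructor
  · intro h
    rw [posA, Finset.mem_image] at h
    obtain ⟨p, hp, rfl⟩ := h
    rw [Finset.mem_filter, Finset.mem_product, Finset.mem_Icc, Finset.mem_Icc] at hp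
    exact ⟨p.1, p.2, hp.1.1.1, hp.2, hp.1.2.2, rfl⟩
  · rintro ⟨a, b, h1, h2, h3, rfl⟩
    rw [posA, Finset.mem_image]
    refine ⟨(a, b), ?_, rfl⟩
    rw [Finset.mem_filter, Finset.mem_product, Finset.mem_Icc, Finset.mem_Icc]
    exact ⟨⟨⟨h1, by omega⟩, ⟨by omega, h3⟩⟩, h2⟩

lemma rootV_inj {a b c d : ℕ} (h1 : 1 ≤ a) (h2 : a < b) (h3 : b ≤ n)
    (h4 : 1 ≤ c) (h5 : c < d) (h6 : d ≤ n)
    (h : rootV n (a, b) = rootV n (c, d)) : a = c ∧ b = d := by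
  have ha : a - 1 < n := by omega
  have hb : b - 1 < n := by omega
  have hc : c - 1 < n := by omega
  have hd : d - 1 < n := by omega
  have e1 := congr_arg (fun v : V n => v ⟨a-1, ha⟩) h
  have e2 := congr_arg (fun v : V n => v ⟨b-1, hb⟩) h
  simp only [rootV_coord a b ha hb, rootV_coord c d hc hd] at e1 e2
  constructor
  · split_ifs at e1 <;> norm_num at e1 <;> omega
  · split_ifs at e2 <;> norm_num at e2 <;> omega

lemma mem_fundAlcove_iff (x : V n) :
    x ∈ fundAlcove (posA n) ↔
      ∀ i j : Fin n, i < j → (0 < x i - x j ∧ x i - x j < 1) := by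
  constructor
  · intro h i j hij
    have hb : ((j:ℕ)+1) - 1 < n := by simp
    have ha : ((i:ℕ)+1) - 1 < n := by simp
    have hmem : rootV n ((i:ℕ)+1, (j:ℕ)+1) ∈ posA n :=
      mem_posA.mpr ⟨(i:ℕ)+1, (j:ℕ)+1, by omega, by omega, by omega, rfl⟩
    have := h _ hmem
    rw [cpair_rootV x _ _ ha hb (by simp; omega)] at this
    have hia : (⟨(i:ℕ)+1-1, ha⟩ : Fin n) = i := by simp
    have hib : (⟨(j:ℕ)+1-1, hb⟩ : Fin n) = j := by simp
    rwa [hia, hib] at this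
  · intro h α hα
    obtain ⟨a, b, h1, h2, h3, rfl⟩ := mem_posA.mp hα
    have ha : a - 1 < n := by omega
    have hb : b - 1 < n := by omega
    rw [cpair_rootV x a b ha hb (by omega)]
    exact h ⟨a-1, ha⟩ ⟨b-1, hb⟩ (by simp [Fin.lt_def]; omega)

/-- a point of the fundamental alcove -/
noncomputable def x0 (n : ℕ) : V n :=
  (WithLp.equiv 2 (Fin n → ℝ)).symm fun i => ((n:ℝ) - 1 - i) / n

lemma x0_mem (hn : 1 ≤ n) : x0 n ∈ fundAlcove (posA n) := by
  rw [mem_fundAlcove_iff]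
  intro i j hij
  have : x0 n i - x0 n j = ((j:ℝ) - i) / n := by
    simp only [x0, WithLp.equiv_symm_apply, PiLp.toLp_apply]
    field_simp
    ring
  rw [this]
  have hn0 : (0:ℝ) < n := by exact_mod_cast hn
  have hij' : (i:ℝ) < j := by exact_mod_cast hij
  have hjn : (j:ℝ) < n := by exact_mod_cast j.isLt
  have hi0 : (0:ℝ) ≤ i := by positivity
  constructor
  · apply div_pos (by linarith) hn0
  · rw [div_lt_one hn0]; linarith
end Analytic2
section WfinPerm
variable {n : ℕ}

/-- the coordinate-permutation action on V n -/
noncomputable def permMap (σ : Equiv.Perm (Fin n)) : Function.End (V n) :=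
  fun x => (WithLp.equiv 2 (Fin n → ℝ)).symm fun i => x (σ i)

lemma permMap_apply (σ : Equiv.Perm (Fin n)) (x : V n) (i : Fin n) :
    permMap σ x i = x (σ i) := rfl

lemma permMap_one : permMap (1 : Equiv.Perm (Fin n)) = 1 := by
  funext x
  rfl

lemma permMap_trans (σ τ : Equiv.Perm (Fin n)) :
    permMap (σ.trans τ) = permMap σ * permMap τ := by
  funext x
  rfl

lemma affRefl_eq_permMap (a b : ℕ) (h1 : 1 ≤ a) (h2 : a < b) (h3 : b ≤ n) :
    affRefl (rootV n (a, b)) 0 =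
      permMap (Equiv.swap (⟨a-1, by omega⟩ : Fin n) (⟨b-1, by omega⟩ : Fin n)) := by
  have ha : a - 1 < n := by omega
  have hb : b - 1 < n := by omega
  funext x
  have : ∀ i : Fin n, affRefl (rootV n (a, b)) 0 x i =
      permMap (Equiv.swap (⟨a-1, ha⟩ : Fin n) (⟨b-1, hb⟩ : Fin n)) x i := by
    intro i
    rw [permMap_apply, affRefl]
    have hiab : (⟨a-1, ha⟩ : Fin n) ≠ ⟨b-1, hb⟩ := by
      simp only [ne_eq, Fin.mk.injEq]; omega
    simp only [PiLp.sub_apply, PiLp.smul_apply, smul_eq_mul,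
      cpair_rootV x a b ha hb (by omega), rootV_coord a b ha hb]
    have hd : ¬ (a - 1 = b - 1) := by omega
    by_cases hia : i = (⟨a-1, ha⟩ : Fin n)
    · rw [hia, Equiv.swap_apply_left]
      simp only [Fin.mk.injEq, if_true, if_neg hd]
      ring
    · by_cases hib : i = (⟨b-1, hb⟩ : Fin n)
      · rw [hib, Equiv.swap_apply_right]
        have hd2 : ¬ (b - 1 = a - 1) := by omega
        simp only [Fin.mk.injEq, if_true, if_neg hd2]
        ring
      · rw [Equiv.swap_apply_of_ne_of_ne hia hib]
        have e1 : ¬ ((i:ℕ) = a - 1) := fun h => hia (Fin.ext h)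
        have e2 : ¬ ((i:ℕ) = b - 1) := fun h => hib (Fin.ext h)
        rw [if_neg e1, if_neg e2]
        ring
  ext i
  exact this i

lemma wfin_exists_perm {g : Function.End (V n)} (hg : g ∈ Wfin (posA n)) :
    ∃ σ : Equiv.Perm (Fin n), g = permMap σ := by
  induction hg using Submonoid.closure_induction with
  | mem x hx =>
    obtain ⟨α, hα, rfl⟩ := hx
    obtain ⟨a, b, h1, h2, h3, rfl⟩ := mem_posA.mp hα
    exact ⟨_, affRefl_eq_permMap a b h1 h2 h3⟩
  | one => exact ⟨1, permMap_one.symm⟩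
  | mul x y hx hy ihx ihy =>
    obtain ⟨σ, rfl⟩ := ihx
    obtain ⟨τ, rfl⟩ := ihy
    exact ⟨σ.trans τ, (permMap_trans σ τ).symm⟩

lemma permMap_mem (σ : Equiv.Perm (Fin n)) : permMap σ ∈ Wfin (posA n) := by
  refine Equiv.Perm.swap_induction_on σ ?_ ?_
  · rw [permMap_one]; exact Submonoid.one_mem _
  · intro f x y hxy ih
    have hswap : ∀ u v : Fin n, u < v →
        permMap (Equiv.swap u v) ∈ Wfin (posA n) := by
      intro u v huv
      have h1 : 1 ≤ (u:ℕ) + 1 := by omega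
      have h2 : (u:ℕ) + 1 < (v:ℕ) + 1 := by
        simp only [add_lt_add_iff_right]; exact_mod_cast huv
      have h3 : (v:ℕ) + 1 ≤ n := v.isLt
      have hmem : rootV n ((u:ℕ)+1, (v:ℕ)+1) ∈ posA n :=
        mem_posA.mpr ⟨(u:ℕ)+1, (v:ℕ)+1, h1, h2, h3, rfl⟩
      have heq := affRefl_eq_permMap ((u:ℕ)+1) ((v:ℕ)+1) h1 h2 h3
      have hu : (⟨(u:ℕ)+1-1, by omega⟩ : Fin n) = u := by ext; simp
      have hv : (⟨(v:ℕ)+1-1, by omega⟩ : Fin n) = v := by ext; simp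
      rw [hu, hv] at heq
      rw [← heq]
      exact Submonoid.subset_closure ⟨_, hmem, rfl⟩
    have hsw : permMap (Equiv.swap x y) ∈ Wfin (posA n) := by
      rcases lt_or_gt_of_ne hxy with h | h
      · exact hswap x y h
      · rw [Equiv.swap_comm]; exact hswap y x h
    have : Equiv.swap x y * f = f.trans (Equiv.swap x y) := rfl
    rw [this, permMap_trans]
    exact Submonoid.mul_mem _ ih hsw
end WfinPerm
section LamVec
variable {n : ℕ} {lam : ℕ → ℕ}

lemma epsN_coord (a : ℕ) (ha : a - 1 < n) (i : Fin n) :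
    epsN n a i = if (i:ℕ) = a - 1 then (1:ℝ) else 0 := by
  rw [epsN_eq a ha]
  simp [EuclideanSpace.single_apply, Fin.ext_iff]

lemma lamVec_coord (hn : 2 ≤ n) (hlen : ∀ i, n - 1 < i → lam i = 0) (i : Fin n) :
    lamVecV n lam i = lam ((i:ℕ) + 1) := by
  rw [lamVecV]
  have happ : (∑ k ∈ Finset.Icc 1 (n-1), (lam k : ℝ) • epsN n k) i
      = ∑ k ∈ Finset.Icc 1 (n-1), ((lam k : ℝ) • epsN n k) i := by
    rw [WithLp.ofLp_sum]; exact Finset.sum_apply i _ _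
  rw [happ]
  rw [Finset.sum_eq_single ((i:ℕ) + 1)]
  · have hb : (i:ℕ) + 1 - 1 < n := by omega
    rw [PiLp.smul_apply, epsN_coord _ hb, if_pos (by omega)]
    simp
  · intro k hk hki
    rw [Finset.mem_Icc] at hk
    have hb : k - 1 < n := by omega
    rw [PiLp.smul_apply, epsN_coord _ hb, if_neg (by omega)]
    simp
  · intro hnotin
    rw [Finset.mem_Icc] at hnotin
    have : lam ((i:ℕ) + 1) = 0 := hlen _ (by omega)
    have hb : (i:ℕ) + 1 - 1 < n := by omega
    rw [PiLp.smul_apply, epsN_coord _ hb, if_pos (by omega), this]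
    simp

lemma cpair_image (hn : 2 ≤ n) (hlen : ∀ i, n - 1 < i → lam i = 0)
    (σ : Equiv.Perm (Fin n)) (x : V n) (a b : ℕ)
    (h1 : 1 ≤ a) (h2 : a < b) (h3 : b ≤ n) (ha : a - 1 < n) (hb : b - 1 < n) :
    cpair ((tau (lamVecV n lam) * permMap σ) x) (rootV n (a, b)) =
      x (σ ⟨a-1, ha⟩) - x (σ ⟨b-1, hb⟩) + (lam a : ℝ) - lam b := by
  have hab : a - 1 ≠ b - 1 := by omega
  have hstep : (tau (lamVecV n lam) * permMap σ) x = permMap σ x + lamVecV n lam := rfl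
  rw [hstep, cpair_rootV _ a b ha hb hab]
  rw [PiLp.add_apply, PiLp.add_apply, permMap_apply, permMap_apply,
    lamVec_coord hn hlen, lamVec_coord hn hlen]
  have e1 : a - 1 + 1 = a := by omega
  have e2 : b - 1 + 1 = b := by omega
  rw [e1, e2]
  ring
end LamVec
section Sep
variable {n : ℕ} {lam : ℕ → ℕ}

/-- the integer interval bound for root (a,b) and permutation σ -/
noncomputable def Dint (lam : ℕ → ℕ) (σ : Equiv.Perm (Fin n)) (i j : Fin n) : ℤ :=
  (lam ((i:ℕ)+1) : ℤ) - lam ((j:ℕ)+1) - (if σ j < σ i then 1 else 0)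

lemma image_cpair_bounds (hn : 2 ≤ n) (hlen : ∀ i, n - 1 < i → lam i = 0)
    (σ : Equiv.Perm (Fin n)) {y : V n}
    (hy : y ∈ (tau (lamVecV n lam) * permMap σ) '' fundAlcove (posA n))
    (a b : ℕ) (h1 : 1 ≤ a) (h2 : a < b) (h3 : b ≤ n)
    (ha : a - 1 < n) (hb : b - 1 < n) :
    ((Dint lam σ ⟨a-1, ha⟩ ⟨b-1, hb⟩ : ℝ) < cpair y (rootV n (a, b))) ∧
     (cpair y (rootV n (a, b)) < Dint lam σ ⟨a-1, ha⟩ ⟨b-1, hb⟩ + 1) := by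
  obtain ⟨x, hx, rfl⟩ := hy
  rw [cpair_image hn hlen σ x a b h1 h2 h3 ha hb]
  have hxb := (mem_fundAlcove_iff x).mp hx
  have hne : σ (⟨a-1, ha⟩ : Fin n) ≠ σ ⟨b-1, hb⟩ := by
    intro h
    have := σ.injective h
    simp only [Fin.mk.injEq] at this
    omega
  have e1 : (⟨a-1, ha⟩ : Fin n).val + 1 = a := by simp only [Fin.val_mk]; omega
  have e2 : (⟨b-1, hb⟩ : Fin n).val + 1 = b := by simp only [Fin.val_mk]; omega
  rw [Dint, e1, e2]
  by_cases hlt : σ (⟨b-1, hb⟩ : Fin n) < σ ⟨a-1, ha⟩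
  · have hb2 := hxb _ _ hlt
    rw [if_pos hlt]
    push_cast
    constructor <;> linarith [hb2.1, hb2.2]
  · have hlt2 : σ (⟨a-1, ha⟩ : Fin n) < σ ⟨b-1, hb⟩ :=
      lt_of_le_of_ne (le_of_not_gt hlt) hne
    have hb2 := hxb _ _ hlt2
    rw [if_neg hlt]
    push_cast
    constructor <;> linarith [hb2.1, hb2.2]

lemma fund_cpair_bounds {x : V n} (hx : x ∈ fundAlcove (posA n))
    (a b : ℕ) (h1 : 1 ≤ a) (h2 : a < b) (h3 : b ≤ n)
    (ha : a - 1 < n) (hb : b - 1 < n) :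
    0 < cpair x (rootV n (a, b)) ∧ cpair x (rootV n (a, b)) < 1 := by
  rw [cpair_rootV x a b ha hb (by omega)]
  exact (mem_fundAlcove_iff x).mp hx ⟨a-1, ha⟩ ⟨b-1, hb⟩ (by simp [Fin.lt_def]; omega)

lemma sep_iff (hn : 2 ≤ n)
    (hmono : ∀ a b, 1 ≤ a → a < b → b ≤ n → lam b < lam a)
    (hlen : ∀ i, n - 1 < i → lam i = 0)
    (σ : Equiv.Perm (Fin n)) (a b : ℕ)
    (h1 : 1 ≤ a) (h2 : a < b) (h3 : b ≤ n)
    (ha : a - 1 < n) (hb : b - 1 < n) (k : ℤ) :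
    SeparatesH (rootV n (a, b)) (k : ℝ) (fundAlcove (posA n))
      ((tau (lamVecV n lam) * permMap σ) '' fundAlcove (posA n)) ↔
      1 ≤ k ∧ k ≤ Dint lam σ ⟨a-1, ha⟩ ⟨b-1, hb⟩ := by
  set D := Dint lam σ ⟨a-1, ha⟩ ⟨b-1, hb⟩ with hD
  have hD0 : 0 ≤ D := by
    rw [hD, Dint]
    have e1 : (⟨a-1, ha⟩ : Fin n).val + 1 = a := by simp only [Fin.val_mk]; omega
    have e2 : (⟨b-1, hb⟩ : Fin n).val + 1 = b := by simp only [Fin.val_mk]; omega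
    rw [e1, e2]
    have := hmono a b h1 h2 h3
    split_ifs <;> push_cast <;> omega
  have hx0 : x0 n ∈ fundAlcove (posA n) := x0_mem (by omega)
  have hy0 : (tau (lamVecV n lam) * permMap σ) (x0 n) ∈
      (tau (lamVecV n lam) * permMap σ) '' fundAlcove (posA n) :=
    Set.mem_image_of_mem _ hx0
  constructor
  · rintro (⟨hA, hB⟩ | ⟨hB, hA⟩)
    · have b1 := fund_cpair_bounds hx0 a b h1 h2 h3 ha hb
      have b2 := image_cpair_bounds hn hlen σ hy0 a b h1 h2 h3 ha hb
      have r1 := hA _ hx0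
      have r2 := hB _ hy0
      constructor
      · have h0 : (0:ℝ) < k := lt_trans b1.1 r1
        have : (0:ℤ) < k := by exact_mod_cast h0
        omega
      · have : (k:ℝ) < D + 1 := lt_trans r2 b2.2
        have : k < D + 1 := by exact_mod_cast this
        omega
    · exfalso
      have b1 := fund_cpair_bounds hx0 a b h1 h2 h3 ha hb
      have b2 := image_cpair_bounds hn hlen σ hy0 a b h1 h2 h3 ha hb
      have r1 := hA _ hx0
      have r2 := hB _ hy0
      have : (D:ℝ) < k := lt_trans b2.1 r2
      have hcontra : (k:ℝ) < 1 := lt_trans r1 b1.2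
      have h1' : D < k := by exact_mod_cast this
      have h2' : (k:ℝ) < 1 := hcontra
      have : k < 1 := by exact_mod_cast h2'
      omega
  · rintro ⟨hk1, hk2⟩
    left
    constructor
    · intro x hx
      have b1 := fund_cpair_bounds hx a b h1 h2 h3 ha hb
      have : (1:ℝ) ≤ k := by exact_mod_cast hk1
      linarith [b1.2]
    · intro y hy
      have b2 := image_cpair_bounds hn hlen σ hy a b h1 h2 h3 ha hb
      have : (k:ℝ) ≤ D := by exact_mod_cast hk2
      linarith [b2.1]
end Sep
section Count
variable {n : ℕ} {lam : ℕ → ℕ}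

/-- Fin-indexed pairs i < j -/
def TFin (n : ℕ) : Finset (Fin n × Fin n) :=
  Finset.univ.filter fun q => q.1 < q.2

/-- embedding of labelled data into V n × ℤ -/
noncomputable def eMap (n : ℕ) : (Fin n × Fin n) × ℤ → V n × ℤ :=
  fun t => (rootV n ((t.1.1 : ℕ) + 1, (t.1.2 : ℕ) + 1), t.2)

open Classical in
noncomputable def Fset (lam : ℕ → ℕ) (σ : Equiv.Perm (Fin n)) :
    Finset ((Fin n × Fin n) × ℤ) :=
  (TFin n).biUnion fun q => {q} ×ˢ Finset.Icc (1:ℤ) (Dint lam σ q.1 q.2)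

lemma mem_Fset {σ : Equiv.Perm (Fin n)} {t : (Fin n × Fin n) × ℤ} :
    t ∈ Fset lam σ ↔ t.1.1 < t.1.2 ∧ 1 ≤ t.2 ∧ t.2 ≤ Dint lam σ t.1.1 t.1.2 := by
  classical
  unfold Fset
  rw [Finset.mem_biUnion]
  constructor
  · rintro ⟨q, hq, ht⟩
    rw [Finset.mem_product, Finset.mem_singleton] at ht
    obtain ⟨rfl, htk⟩ := ht
    rw [TFin, Finset.mem_filter] at hq
    rw [Finset.mem_Icc] at htk
    exact ⟨hq.2, htk.1, htk.2⟩
  · rintro ⟨hlt, hk1, hk2⟩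
    refine ⟨t.1, ?_, ?_⟩
    · rw [TFin, Finset.mem_filter]; exact ⟨Finset.mem_univ _, hlt⟩
    · rw [Finset.mem_product, Finset.mem_singleton, Finset.mem_Icc]
      exact ⟨rfl, hk1, hk2⟩

lemma lenAff_perm (hn : 2 ≤ n)
    (hmono : ∀ a b, 1 ≤ a → a < b → b ≤ n → lam b < lam a)
    (hlen : ∀ i, n - 1 < i → lam i = 0) (σ : Equiv.Perm (Fin n)) :
    lenAff (posA n) (tau (lamVecV n lam) * permMap σ) =
      ∑ q ∈ TFin n, (Dint lam σ q.1 q.2).toNat := by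
  classical
  rw [lenAff]
  have hset : {q : V n × ℤ | q.1 ∈ posA n ∧
      SeparatesH q.1 (q.2 : ℝ) (fundAlcove (posA n))
        ((tau (lamVecV n lam) * permMap σ) '' fundAlcove (posA n))}
      = eMap n '' ↑(Fset lam σ) := by
    ext ⟨β, k⟩
    simp only [Set.mem_setOf_eq, Set.mem_image, Finset.coe_sort_coe, Finset.mem_coe]
    constructor
    · rintro ⟨hβ, hsep⟩
      obtain ⟨a, b, h1, h2, h3, rfl⟩ := mem_posA.mp hβ
      have ha : a - 1 < n := by omega
      have hb : b - 1 < n := by omega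
      rw [sep_iff hn hmono hlen σ a b h1 h2 h3 ha hb k] at hsep
      refine ⟨((⟨a-1, ha⟩, ⟨b-1, hb⟩), k), ?_, ?_⟩
      · rw [mem_Fset]
        exact ⟨by simp [Fin.lt_def]; omega, hsep.1, hsep.2⟩
      · unfold eMap
        simp only [Fin.val_mk]
        have e1 : a - 1 + 1 = a := by omega
        have e2 : b - 1 + 1 = b := by omega
        rw [e1, e2]
    · rintro ⟨t, ht, heq⟩
      obtain ⟨hb', hk'⟩ := Prod.ext_iff.mp heq
      simp only [eMap] at hb' hk'
      subst hb'
      subst hk'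
      rw [mem_Fset] at ht
      obtain ⟨hlt, hk1, hk2⟩ := ht
      set i := t.1.1
      set j := t.1.2
      have h1 : 1 ≤ (i:ℕ) + 1 := by omega
      have h2 : (i:ℕ) + 1 < (j:ℕ) + 1 := by
        have : (i:ℕ) < (j:ℕ) := hlt
        omega
      have h3 : (j:ℕ) + 1 ≤ n := j.isLt
      have ha : (i:ℕ) + 1 - 1 < n := by omega
      have hb : (j:ℕ) + 1 - 1 < n := by omega
      refine ⟨mem_posA.mpr ⟨(i:ℕ)+1, (j:ℕ)+1, h1, h2, h3, rfl⟩, ?_⟩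
      rw [sep_iff hn hmono hlen σ _ _ h1 h2 h3 ha hb]
      have hi : (⟨(i:ℕ)+1-1, ha⟩ : Fin n) = i := by ext; simp
      have hj : (⟨(j:ℕ)+1-1, hb⟩ : Fin n) = j := by ext; simp
      rw [hi, hj]
      exact ⟨hk1, hk2⟩
  rw [hset]
  rw [Set.ncard_image_of_injOn, Set.ncard_coe_finset]
  · unfold Fset
    rw [Finset.card_biUnion]
    · apply Finset.sum_congr rfl
      intro q hq
      rw [Finset.card_product, Finset.card_singleton, one_mul, Int.card_Icc]
      congr 1
      omega
    · intro q hq q' hq' hne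
      rw [Function.onFun, Finset.disjoint_left]
      rintro t ht ht'
      rw [Finset.mem_product, Finset.mem_singleton] at ht ht'
      exact hne (ht.1 ▸ ht'.1)
  · rintro ⟨⟨i, j⟩, k⟩ ht ⟨⟨i', j'⟩, k'⟩ ht' he
    rw [Finset.mem_coe, mem_Fset] at ht ht'
    simp only at ht ht'
    unfold eMap at he
    simp only [Prod.mk.injEq] at he
    obtain ⟨hroot, hk⟩ := he
    have hlt : (i:ℕ) < (j:ℕ) := ht.1
    have hlt' : (i':ℕ) < (j':ℕ) := ht'.1
    have := rootV_inj (n := n) (by omega) (by omega) j.isLt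
      (by omega) (by omega) j'.isLt hroot
    have hi : i = i' := by ext; omega
    have hj : j = j' := by ext; omega
    rw [hi, hj, hk]
end Count
section Bridge
variable {n : ℕ} {lam : ℕ → ℕ}

lemma bridge (hn : 2 ≤ n) :
    ∑ p ∈ (Finset.Icc 1 n ×ˢ Finset.Icc 1 n).filter (fun p => p.1 < p.2),
      (lam p.1 - lam p.2 - 1) =
    ∑ q ∈ TFin n, (lam ((q.1:ℕ)+1) - lam ((q.2:ℕ)+1) - 1) := by
  have h0 : 0 < n := by omega
  refine Finset.sum_nbij'
    (fun p => ((⟨(p.1 - 1) % n, Nat.mod_lt _ h0⟩ : Fin n), (⟨(p.2 - 1) % n, Nat.mod_lt _ h0⟩ : Fin n)))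
    (fun q => ((q.1:ℕ)+1, (q.2:ℕ)+1)) ?_ ?_ ?_ ?_ ?_
  · intro p hp
    rw [Finset.mem_filter, Finset.mem_product, Finset.mem_Icc, Finset.mem_Icc] at hp
    rw [TFin, Finset.mem_filter]
    refine ⟨Finset.mem_univ _, ?_⟩
    simp only [Fin.lt_def, Fin.val_mk]
    rw [Nat.mod_eq_of_lt (by omega), Nat.mod_eq_of_lt (by omega)]
    omega
  · intro q hq
    rw [TFin, Finset.mem_filter] at hq
    rw [Finset.mem_filter, Finset.mem_product, Finset.mem_Icc, Finset.mem_Icc]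
    have hlt : (q.1:ℕ) < (q.2:ℕ) := hq.2
    have := q.1.isLt
    have := q.2.isLt
    refine ⟨⟨⟨by omega, by omega⟩, by omega, by omega⟩, by omega⟩
  · intro p hp
    rw [Finset.mem_filter, Finset.mem_product, Finset.mem_Icc, Finset.mem_Icc] at hp
    simp only [Fin.val_mk]
    rw [Nat.mod_eq_of_lt (by omega), Nat.mod_eq_of_lt (by omega)]
    have e1 : p.1 - 1 + 1 = p.1 := by omega
    have e2 : p.2 - 1 + 1 = p.2 := by omega
    rw [e1, e2]
  · intro q hq
    ext
    · simp only [Fin.val_mk]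
      have := q.1.isLt
      rw [Nat.add_sub_cancel, Nat.mod_eq_of_lt (by omega)]
    · simp only [Fin.val_mk]
      have := q.2.isLt
      rw [Nat.add_sub_cancel, Nat.mod_eq_of_lt (by omega)]
  · intro p hp
    rw [Finset.mem_filter, Finset.mem_product, Finset.mem_Icc, Finset.mem_Icc] at hp
    simp only [Fin.val_mk]
    rw [Nat.mod_eq_of_lt (by omega), Nat.mod_eq_of_lt (by omega)]
    have e1 : p.1 - 1 + 1 = p.1 := by omega
    have e2 : p.2 - 1 + 1 = p.2 := by omega
    rw [e1, e2]
end Bridge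
theorem gamma_lengths (n : ℕ) (lam : ℕ → ℕ) (hn : 2 ≤ n)
    (hstrict : ∀ i, 1 ≤ i → i < n - 1 → lam (i + 1) < lam i)
    (hpos : 0 < lam (n - 1))
    (hlen : ∀ i, n - 1 < i → lam i = 0) :
    (∀ k, k ≤ n - 1 → (GammaSeg n k).length = k * (n - k)) ∧
    (∀ k, k ≤ n - 1 → (GammaSeg' n k).length = k * (n - k - 1)) ∧
    (∀ v : Function.End (V n), IsMinCoset (posA n) (lamVecV n lam) v →
      (GammaChain n lam).length = lenAff (posA n) v) := by
  have hmono := lam_strict n lam hn hstrict hpos hlen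
  refine ⟨fun k _ => GammaSeg_length n k, fun k _ => GammaSeg'_length n k, ?_⟩
  intro v hv
  obtain ⟨⟨u, hu, hveq⟩, hmin⟩ := hv
  obtain ⟨σ, rfl⟩ := wfin_exists_perm hu
  have hchain : (GammaChain n lam).length
      = ∑ q ∈ TFin n, (lam ((q.1:ℕ)+1) - lam ((q.2:ℕ)+1) - 1) := by
    rw [chain_length hn hmono hlen, bridge hn]
  have hlam_q : ∀ q ∈ TFin n, lam ((q.2:ℕ)+1) < lam ((q.1:ℕ)+1) := by
    intro q hq
    rw [TFin, Finset.mem_filter] at hq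
    have hlt : (q.1:ℕ) < (q.2:ℕ) := hq.2
    exact hmono _ _ (by omega) (by omega) q.2.isLt
  have hlow : ∑ q ∈ TFin n, (lam ((q.1:ℕ)+1) - lam ((q.2:ℕ)+1) - 1)
      ≤ lenAff (posA n) v := by
    rw [hveq, lenAff_perm hn hmono hlen σ]
    apply Finset.sum_le_sum
    intro q hq
    have := hlam_q q hq
    rw [Dint]
    split_ifs <;> omega
  have hup : lenAff (posA n) v
      ≤ ∑ q ∈ TFin n, (lam ((q.1:ℕ)+1) - lam ((q.2:ℕ)+1) - 1) := by
    have hrev : ∃ u' ∈ Wfin (posA n),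
        (tau (lamVecV n lam) * permMap (Fin.revPerm : Equiv.Perm (Fin n))
          : Function.End (V n)) = tau (lamVecV n lam) * u' :=
      ⟨permMap Fin.revPerm, permMap_mem _, rfl⟩
    have hle := hmin _ hrev
    rw [hveq] at hle ⊢
    refine le_trans hle ?_
    rw [lenAff_perm hn hmono hlen]
    apply le_of_eq
    apply Finset.sum_congr rfl
    intro q hq
    have hlam := hlam_q q hq
    rw [TFin, Finset.mem_filter] at hq
    have hlt : q.1 < q.2 := hq.2
    rw [Dint, Fin.revPerm_apply, Fin.revPerm_apply, if_pos (Fin.rev_lt_rev.mpr hlt)]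
    omega
  omega

end Stmt16
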